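/- Let m : ℝ → ℝ be monotone nondecreasing and bounded above on [0,∞), and let a, b be real numbers with a ≥ 1 and b ≥ 0 such that m(λ·r₁ + (1−λ)·r₂) ≤ λ·m(a·r₁ + b) + (1−λ)·m(a·r₂ + b) for all λ ∈ [0,1] and all r₁, r₂ ≥ 0. Then m(r) ≤ m(b) for every r ≥ 0; in particular, m is constant on [b,∞). -/

import Mathlib

/-- If `m` is monotone nondecreasing and bounded above on `[0,∞)` and
satisfies the weak convexity inequality
`m (λ r₁ + (1−λ) r₂) ≤ λ m (a r₁ + b) + (1−λ) m (a r₂ + b)` for some `a ≥ 1`, `b ≥ 0`,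
then `m r ≤ m b` for all `r ≥ 0`; in particular `m` is constant on `[b,∞)`. -/
theorem stmt19 (m : ℝ → ℝ) (hmono : MonotoneOn m (Set.Ici 0))
    (B : ℝ) (hB : ∀ r, 0 ≤ r → m r ≤ B)
    (a b : ℝ) (ha : 1 ≤ a) (hb : 0 ≤ b)
    (hconv : ∀ lam ∈ Set.Icc (0 : ℝ) 1, ∀ r₁ ∈ Set.Ici (0 : ℝ), ∀ r₂ ∈ Set.Ici (0 : ℝ),
      m (lam * r₁ + (1 - lam) * r₂) ≤ lam * m (a * r₁ + b) + (1 - lam) * m (a * r₂ + b)) :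
    (∀ r, 0 ≤ r → m r ≤ m b) ∧ ∀ r, b ≤ r → m r = m b := by
  have key : ∀ r, 0 ≤ r → ∀ ε : ℝ, 0 < ε → ε ≤ 1 → m r - m b ≤ ε * (B - m b) := by
    intro r hr ε hε hε1
    have hr2 : (0:ℝ) ≤ r / ε := by positivity
    have h := hconv (1 - ε) ⟨by linarith, by linarith⟩ 0 (Set.mem_Ici.mpr le_rfl) (r / ε) (Set.mem_Ici.mpr hr2)
    have heq : (1 - ε) * 0 + (1 - (1 - ε)) * (r / ε) = r := by
      field_simp
      ring
    rw [heq] at h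
    have h1 : m (a * (r / ε) + b) ≤ B := by
      apply hB
      have : 0 ≤ a * (r / ε) := by positivity
      linarith
    have h2 : a * 0 + b = b := by ring
    rw [h2] at h
    nlinarith
  have main : ∀ r, 0 ≤ r → m r ≤ m b := by
    intro r hr
    by_contra hc
    push_neg at hc
    have hCge : m r - m b ≤ 1 * (B - m b) := key r hr 1 one_pos le_rfl
    have hC : 0 < B - m b := by linarith
    have hε : 0 < (m r - m b) / (2 * (B - m b)) := div_pos (by linarith) (by linarith)
    have hε1 : (m r - m b) / (2 * (B - m b)) ≤ 1 := by
      rw [div_le_one (by linarith)]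
      linarith
    have := key r hr _ hε hε1
    have h3 : (m r - m b) / (2 * (B - m b)) * (B - m b) = (m r - m b) / 2 := by
      field_simp
    rw [h3] at this
    linarith
  refine ⟨main, fun r hr => ?_⟩
  have hr0 : (0:ℝ) ≤ r := le_trans hb hr
  exact le_antisymm (main r hr0) (hmono hb hr0 hr)
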